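/- For every vertex v of the integer hull of a knapsack polytope with s = |supp(v)| and Δ = ‖a‖_∞, one has s ≤ log₂(3.51 · √s · Δ). -/

import Mathlib

/-!
Let `v` be a vertex of the integer hull, supported on `S` with `|S| = s`. Then `v` is itself a
feasible integer point, and the subset sums `a(T)`, `T ⊆ S`, are pairwise distinct: if
`a(T₁) = a(T₂)` then `w = 𝟙_{T₁} - 𝟙_{T₂}` satisfies `aᵀw = 0`, and since `v ≥ 1` on `S`,
both `v ± w` are feasible, so `v` is their midpoint unless `w = 0`.

The `2^s` distinct subset sums cannot crowd around `a(S)/2`: the identity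
`∑_{T ⊆ S} (2 a(T) - a(S))² = 2^s ‖a[S]‖²` shows that fewer than a quarter of them lie
farther than `‖a[S]‖` from `a(S)/2`, while at most `2‖a[S]‖ + 1` distinct integers lie within
that distance. Hence `3 · 2^s ≤ 8 ‖a[S]‖ + 3 ≤ 8 √s Δ + 3`, which gives `2^s ≤ 3.51 √s Δ`.
-/

/-- The integer hull of the knapsack polytope `{x ≥ 0 : aᵀx = b}`. -/
def knapsackHull {n : ℕ} (a : Fin n → ℤ) (b : ℤ) : Set (Fin n → ℝ) :=
  convexHull ℝ
    {x | ∃ z : Fin n → ℤ, (∀ i, 0 ≤ z i) ∧ (∑ i, a i * z i) = b ∧ x = fun i => (z i : ℝ)}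

/-- `v` is a vertex of `P` if `v ∈ P` and `v` is not in the convex hull of `P \ {v}`. -/
def IsVertex {n : ℕ} (P : Set (Fin n → ℝ)) (v : Fin n → ℝ) : Prop :=
  v ∈ P ∧ v ∉ convexHull ℝ (P \ {v})

open Finset

theorem Int.card_le_of_forall_abs_sub_le {A : Finset ℤ} {x r : ℝ} (hr : 0 ≤ r)
    (h : ∀ t ∈ A, |(t : ℝ) - x| ≤ r) : (#A : ℝ) ≤ 2 * r + 1 := by
  have hsub : A ⊆ Icc ⌈x - r⌉ ⌊x + r⌋ := fun t ht => by
    have := abs_le.1 (h t ht)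
    exact mem_Icc.2 ⟨Int.ceil_le.2 (by linarith), Int.le_floor.2 (by linarith)⟩
  have hIcc : ((⌊x + r⌋ + 1 - ⌈x - r⌉ : ℤ).toNat : ℝ) ≤ 2 * r + 1 := by
    have := Int.floor_le (x + r)
    have := Int.le_ceil (x - r)
    rcases le_or_gt 0 (⌊x + r⌋ + 1 - ⌈x - r⌉) with h | h
    · rw [← Int.cast_natCast, Int.toNat_of_nonneg h]; push_cast; linarith
    · rw [Int.toNat_of_nonpos h.le]; push_cast; linarith
  calc (#A : ℝ) ≤ #(Icc ⌈x - r⌉ ⌊x + r⌋) := by exact_mod_cast card_le_card hsub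
    _ ≤ 2 * r + 1 := by rwa [Int.card_Icc]

section SubsetSums

variable {ι : Type*}

theorem sum_powerset_sq_two_mul_sum_sub_sum [DecidableEq ι] {R : Type*} [CommRing R] (a : ι → R)
    (S : Finset ι) :
    ∑ T ∈ S.powerset, (2 * ∑ i ∈ T, a i - ∑ i ∈ S, a i) ^ 2 = 2 ^ #S * ∑ i ∈ S, a i ^ 2 := by
  induction S using Finset.induction_on with
  | empty => simp
  | @insert j S hj ih =>
    rw [sum_powerset_insert hj, sum_insert hj, sum_insert hj, card_insert_of_notMem hj,
      ← sum_add_distrib]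
    calc ∑ T ∈ S.powerset, ((2 * ∑ i ∈ T, a i - (a j + ∑ i ∈ S, a i)) ^ 2 +
          (2 * ∑ i ∈ insert j T, a i - (a j + ∑ i ∈ S, a i)) ^ 2)
        = ∑ T ∈ S.powerset, (2 * (2 * ∑ i ∈ T, a i - ∑ i ∈ S, a i) ^ 2 + 2 * a j ^ 2) := by
          refine sum_congr rfl fun T hT => ?_
          rw [sum_insert fun h => hj (mem_powerset.1 hT h)]
          ring
      _ = 2 ^ (#S + 1) * (a j ^ 2 + ∑ i ∈ S, a i ^ 2) := by
          rw [sum_add_distrib, ← mul_sum, ih, sum_const, card_powerset, nsmul_eq_mul]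
          push_cast
          ring

theorem four_mul_card_filter_lt_sq_add_one_le [DecidableEq ι] (a : ι → ℤ) (S : Finset ι) :
    4 * #{T ∈ S.powerset | 4 * ∑ i ∈ S, a i ^ 2 < (2 * ∑ i ∈ T, a i - ∑ i ∈ S, a i) ^ 2} + 1
      ≤ 2 ^ #S := by
  set N := ∑ i ∈ S, a i ^ 2
  set C := {T ∈ S.powerset | 4 * N < (2 * ∑ i ∈ T, a i - ∑ i ∈ S, a i) ^ 2}
  have hN : 0 ≤ N := sum_nonneg fun i _ => sq_nonneg (a i)
  have hmarkov : (4 * N + 1) * #C ≤ 2 ^ #S * N :=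
    calc (4 * N + 1) * #C = ∑ _T ∈ C, (4 * N + 1) := by rw [sum_const, nsmul_eq_mul, mul_comm]
      _ ≤ ∑ T ∈ C, (2 * ∑ i ∈ T, a i - ∑ i ∈ S, a i) ^ 2 :=
          sum_le_sum fun T hT => (mem_filter.1 hT).2
      _ ≤ ∑ T ∈ S.powerset, (2 * ∑ i ∈ T, a i - ∑ i ∈ S, a i) ^ 2 :=
          sum_le_sum_of_subset_of_nonneg (filter_subset _ _) fun T _ _ => sq_nonneg _
      _ = 2 ^ #S * N := sum_powerset_sq_two_mul_sum_sub_sum a S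
  have hpow : (1 : ℤ) ≤ 2 ^ #S := one_le_pow₀ (by norm_num)
  suffices (4 * #C + 1 : ℤ) ≤ 2 ^ #S by exact_mod_cast this
  by_contra! h
  nlinarith [mul_le_mul_of_nonneg_right (Int.le_of_lt_add_one h) hN]

theorem card_filter_sq_le_le_of_injOn (a : ι → ℤ) (S : Finset ι)
    (hinj : Set.InjOn (fun T => ∑ i ∈ T, a i) S.powerset) :
    (#{T ∈ S.powerset | (2 * ∑ i ∈ T, a i - ∑ i ∈ S, a i) ^ 2 ≤ 4 * ∑ i ∈ S, a i ^ 2} : ℝ)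
      ≤ 2 * √(∑ i ∈ S, (a i : ℝ) ^ 2) + 1 := by
  rw [← card_image_of_injOn (hinj.mono (coe_subset.2 (filter_subset _ _)))]
  refine Int.card_le_of_forall_abs_sub_le (x := (∑ i ∈ S, a i : ℤ) / 2) (Real.sqrt_nonneg _) ?_
  simp only [mem_image]
  rintro _ ⟨T, hT, rfl⟩
  have hsq : ((2 * ∑ i ∈ T, a i - ∑ i ∈ S, a i) ^ 2 : ℝ) ≤ 4 * ∑ i ∈ S, (a i : ℝ) ^ 2 := by
    exact_mod_cast (mem_filter.1 hT).2
  apply Real.abs_le_sqrt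
  push_cast at hsq ⊢
  nlinarith [hsq]

theorem three_mul_two_pow_card_le_of_injOn_sum [DecidableEq ι] (a : ι → ℤ) (S : Finset ι)
    (hinj : Set.InjOn (fun T => ∑ i ∈ T, a i) S.powerset) :
    3 * 2 ^ #S ≤ 8 * √(∑ i ∈ S, (a i : ℝ) ^ 2) + 3 := by
  have hsplit := card_filter_add_card_filter_not (s := S.powerset)
    fun T => (2 * ∑ i ∈ T, a i - ∑ i ∈ S, a i) ^ 2 ≤ 4 * ∑ i ∈ S, a i ^ 2
  simp only [not_le, card_powerset] at hsplit
  have hnear := card_filter_sq_le_le_of_injOn a S hinj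
  have hfar := (Nat.cast_le (α := ℝ)).2 (four_mul_card_filter_lt_sq_add_one_le a S)
  replace hsplit := congrArg (Nat.cast : ℕ → ℝ) hsplit
  push_cast at hfar hsplit
  linarith

theorem sqrt_sum_sq_le_sqrt_card_mul (a : ι → ℤ) (S : Finset ι) {Δ : ℕ}
    (h : ∀ i ∈ S, (a i).natAbs ≤ Δ) :
    √(∑ i ∈ S, (a i : ℝ) ^ 2) ≤ √(#S : ℝ) * Δ := by
  have hsum : ∑ i ∈ S, (a i : ℝ) ^ 2 ≤ #S * (Δ : ℝ) ^ 2 := by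
    rw [← nsmul_eq_mul]
    refine sum_le_card_nsmul _ _ _ fun i hi => ?_
    rw [← sq_abs, ← Int.cast_abs, ← Nat.cast_natAbs]
    gcongr
    exact_mod_cast h i hi
  calc √(∑ i ∈ S, (a i : ℝ) ^ 2) ≤ √(#S * (Δ : ℝ) ^ 2) := Real.sqrt_le_sqrt hsum
    _ = √(#S : ℝ) * Δ := by rw [Real.sqrt_mul (Nat.cast_nonneg _), Real.sqrt_sq (Nat.cast_nonneg _)]

end SubsetSums

theorem le_logb_of_three_mul_two_pow_le {s Δ : ℕ} (hs : 1 ≤ s)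
    (h : 3 * 2 ^ s ≤ 8 * √s * Δ + 3) : (s : ℝ) ≤ Real.logb 2 (3.51 * √s * Δ) := by
  have hpow : (2 : ℝ) ≤ 2 ^ s := by simpa using pow_le_pow_right₀ one_le_two hs
  have hΔ : (1 : ℝ) ≤ Δ := by
    rcases Nat.eq_zero_or_pos Δ with rfl | hΔ
    · simp at h; linarith
    · exact_mod_cast hΔ
  have hsqrt : (1 : ℝ) ≤ √s := Real.one_le_sqrt.2 (by exact_mod_cast hs)
  have key : (2 : ℝ) ^ s ≤ 3.51 * √s * Δ := by
    rcases hs.eq_or_lt with rfl | hs2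
    · simp; linarith
    · have h2 : √2 ≤ √s := Real.sqrt_le_sqrt (by exact_mod_cast hs2)
      have h1414 : (1.414 : ℝ) ≤ √2 := Real.le_sqrt_of_sq_le (by norm_num)
      nlinarith
  rw [Real.le_logb_iff_rpow_le one_lt_two (by positivity), Real.rpow_natCast]
  exact key

section Knapsack

variable {n : ℕ}

theorem IsVertex.mem_of_convexHull {A : Set (Fin n → ℝ)} {v : Fin n → ℝ}
    (hv : IsVertex (convexHull ℝ A) v) : v ∈ A := by
  by_contra hvA
  refine hv.2 (convexHull_mono (fun x hx => ?_) hv.1)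
  exact ⟨subset_convexHull ℝ A hx, fun hxv => hvA (Set.mem_singleton_iff.1 hxv ▸ hx)⟩

theorem IsVertex.eq_zero_of_add_mem_of_sub_mem {P : Set (Fin n → ℝ)} {v w : Fin n → ℝ}
    (hv : IsVertex P v) (hadd : v + w ∈ P) (hsub : v - w ∈ P) : w = 0 := by
  by_contra hw
  have hmid := convex_convexHull ℝ (P \ {v})
    (subset_convexHull ℝ (P \ {v}) (show v + w ∈ P \ {v} from ⟨hadd, by simpa using hw⟩))
    (subset_convexHull ℝ (P \ {v}) (show v - w ∈ P \ {v} from ⟨hsub, by simpa using hw⟩))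
    (by norm_num : (0 : ℝ) ≤ 1 / 2) (by norm_num : (0 : ℝ) ≤ 1 / 2) (by norm_num)
  exact hv.2 (by convert hmid using 1; module)

theorem intCast_mem_knapsackHull {a : Fin n → ℤ} {b : ℤ} {z : Fin n → ℤ}
    (hz : ∀ i, 0 ≤ z i) (hzb : ∑ i, a i * z i = b) :
    (fun i => (z i : ℝ)) ∈ knapsackHull a b :=
  subset_convexHull ℝ _ ⟨z, hz, hzb, rfl⟩

theorem IsVertex.exists_int_of_knapsackHull {a : Fin n → ℤ} {b : ℤ} {v : Fin n → ℝ}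
    (hv : IsVertex (knapsackHull a b) v) :
    ∃ z : Fin n → ℤ, (∀ i, 0 ≤ z i) ∧ ∑ i, a i * z i = b ∧ v = fun i => (z i : ℝ) :=
  hv.mem_of_convexHull

theorem injOn_sum_powerset_of_isVertex {a : Fin n → ℤ} {b : ℤ} {z : Fin n → ℤ}
    (hv : IsVertex (knapsackHull a b) fun i => (z i : ℝ)) (hz : ∀ i, 0 ≤ z i)
    (hzb : ∑ i, a i * z i = b) {S : Finset (Fin n)} (hS : ∀ i ∈ S, z i ≠ 0) :
    Set.InjOn (fun T => ∑ i ∈ T, a i) S.powerset := by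
  intro T₁ hT₁ T₂ hT₂ hsum
  simp only [coe_powerset, Set.mem_preimage, Set.mem_powerset_iff, coe_subset] at hT₁ hT₂
  set w : Fin n → ℤ := fun i => (if i ∈ T₁ then 1 else 0) - if i ∈ T₂ then 1 else 0
  have haw : ∑ i, a i * w i = 0 := by
    simpa [w, mul_sub, sum_sub_distrib, sub_eq_zero] using hsum
  have hzw : ∀ i, 0 ≤ z i + w i ∧ 0 ≤ z i - w i := by
    intro i
    have hpos : i ∈ T₁ ∨ i ∈ T₂ → z i ≠ 0 := fun hi => hS i (hi.elim (hT₁ ·) (hT₂ ·))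
    have := hz i
    by_cases h₁ : i ∈ T₁ <;> by_cases h₂ : i ∈ T₂ <;> simp [w, h₁, h₂] at hpos ⊢ <;> omega
  have hw : (fun i => (w i : ℝ)) = 0 := by
    refine hv.eq_zero_of_add_mem_of_sub_mem ?_ ?_
    · convert intCast_mem_knapsackHull (a := a) (b := b) (z := z + w) (fun i => (hzw i).1)
        (by simp [mul_add, sum_add_distrib, hzb, haw]) using 1
      ext i; simp
    · convert intCast_mem_knapsackHull (a := a) (b := b) (z := z - w) (fun i => (hzw i).2)
        (by simp [mul_sub, sum_sub_distrib, hzb, haw]) using 1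
      ext i; simp
  ext i
  have := congrFun hw i
  by_cases h₁ : i ∈ T₁ <;> by_cases h₂ : i ∈ T₂ <;> simp_all [w]

end Knapsack

theorem stmt3_general {n : ℕ} (a : Fin n → ℤ) (b : ℤ) (v : Fin n → ℝ)
    (hv : IsVertex (knapsackHull a b) v)
    (s : ℕ) (hs : s = (Function.support v).ncard)
    (Δ : ℕ) (hΔ : Δ = Finset.univ.sup fun i => (a i).natAbs) :
    (s : ℝ) ≤ Real.logb 2 (3.51 * Real.sqrt s * Δ) := by
  obtain ⟨z, hz, hzb, rfl⟩ := hv.exists_int_of_knapsackHull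
  set S : Finset (Fin n) := {i | z i ≠ 0}
  have hsS : s = #S := by
    rw [hs, ← Set.ncard_coe_finset]
    congr 1
    ext i
    simp [S]
  rcases Nat.eq_zero_or_pos s with rfl | hs1
  · simp
  have hinj := injOn_sum_powerset_of_isVertex hv hz hzb (S := S) fun i hi => (mem_filter.1 hi).2
  have hcount := three_mul_two_pow_card_le_of_injOn_sum a S hinj
  have hnorm := sqrt_sum_sq_le_sqrt_card_mul a S (Δ := Δ) fun i _ =>
    hΔ ▸ le_sup (f := fun i => (a i).natAbs) (mem_univ i)
  rw [← hsS] at hcount hnorm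
  exact le_logb_of_three_mul_two_pow_le hs1 (by linarith)

theorem stmt3 {n : ℕ} (a : Fin n → ℤ) (ha : a ≠ 0) (b : ℤ) (v : Fin n → ℝ)
    (hv : IsVertex (knapsackHull a b) v)
    (s : ℕ) (hs : s = (Function.support v).ncard)
    (Δ : ℕ) (hΔ : Δ = Finset.univ.sup fun i => (a i).natAbs) :
    (s : ℝ) ≤ Real.logb 2 (3.51 * Real.sqrt s * Δ) :=
  stmt3_general a b v hv s hs Δ hΔ
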